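/- Let X be a holomorphic Poisson submanifold of (Y,Λ₀) cut out locally by w_i¹=⋯=w_i^r=0 (so [Λ₀, w_i^α] = Σ_β w_i^β T_{iα}^β for local vector fields T_{iα}^β). The locally defined maps φ̃_i : Γ(U_i, ∧^{p+1}T_Y|_X) → ⊕^r Γ(U_i, ∧^p T_Y|_X), g ↦ ((−1)^p [g, w_i¹]|_X, …, (−1)^p [g, w_i^r]|_X), glue to a well-defined morphism of complexes of sheaves φ̃: T_Y^•|_X → 𝒩_{X/Y}^•, i.e. they are compatible with transition functions and intertwine the differential −[−,Λ₀]|_X with the connection-type differential ∇ on 𝒩_{X/Y} ⊗ ∧^•T_Y|_X. -/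
import Mathlib


/-!
STATEMENT 16.  The locally defined maps
`φ̃_i : Γ(U_i, ∧^{p+1}T_Y|_X) → ⊕^r Γ(U_i, ∧^p T_Y|_X)`,
`g ↦ ((−1)^p [g,w¹]|_X, …, (−1)^p [g,w^r]|_X)` glue to a morphism of complexes
`φ̃ : T_Y^•|_X → 𝒩_{X/Y}^•`: (a) they are compatible with the transition relations
`w_i^α = Σ_β w_k^β F_{ikβ}^α`, and (b) they intertwine the differential `−[−,Λ₀]|_X`
with the connection-type differential `∇` of `𝒩_{X/Y} ⊗ ∧^•T_Y|_X`, given in the local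
frame by `∇(Σ s_α e^α) = Σ_α (−[s_α,Λ₀]|_{w=0} + Σ_β s_β ∧ T_α^β) e^α`.

Algebraic chart model: `R` = functions near `X`, `S` = functions on `X`,
`ρ : R → S` restriction, `X` cut out by `w¹,…,w^r` with `[Λ₀,w^α] = Σ_β w^β T_α^β`
(`Λ₀` tangent to `X`).  Multivectors are alternating multiderivations; the contraction
`[g,w^α]|_X` is `y ↦ ρ(g(w^α, y))`; `[−,Λ₀]` is realized by the differential `piDiff`
of the complex associated with a Poisson map (with the identity, resp. the
restriction `ρ`, as the map).
-/

structure PoissonBracket (R₀ R : Type*) [CommRing R₀] [CommRing R] [Algebra R₀ R] where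
  br : R → R → R
  add_left : ∀ a b c, br (a + b) c = br a c + br b c
  smul_left : ∀ (r : R₀) (a b : R), br (r • a) b = r • br a b
  antisymm : ∀ a b, br a b = - br b a
  leibniz : ∀ a b c, br a (b * c) = br a b * c + b * br a c
  jacobi : ∀ a b c, br a (br b c) + br b (br c a) + br c (br a b) = 0

variable {k S R : Type*} [Field k] [CommRing S] [CommRing R] [Algebra k S] [Algebra k R]

/-- Alternating multiderivation over `f` (`∧`-multivector with values along `f`). -/
def IsPolyDeriv (f : R →ₐ[k] S) {n : ℕ} (Q : (Fin n → R) → S) : Prop :=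
  (∀ (x : Fin n → R) (i : Fin n) (a b : R),
      Q (Function.update x i (a + b)) = Q (Function.update x i a) + Q (Function.update x i b)) ∧
  (∀ (x : Fin n → R) (i : Fin n) (r : k) (a : R),
      Q (Function.update x i (r • a)) = r • Q (Function.update x i a)) ∧
  (∀ (x : Fin n → R) (i : Fin n) (a b : R),
      Q (Function.update x i (a * b)) =
        f a * Q (Function.update x i b) + f b * Q (Function.update x i a)) ∧
  (∀ (x : Fin n → R) (i j : Fin n), i ≠ j → x i = x j → Q x = 0)

lemma br_zero_right (LS : PoissonBracket k S) (a : S) : LS.br a 0 = 0 := by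
  have h := LS.leibniz a 0 0
  rw [mul_zero] at h
  simpa using h

lemma neg_one_pow_sub' {n j : ℕ} (h : j ≤ n) : (-1:S)^(n - j) = (-1)^(n+j) := by
  obtain ⟨d, rfl⟩ : ∃ d, n = j + d := ⟨n - j, by omega⟩
  rw [show j + d - j = d by omega, show j + d + j = 2*j + d by ring, pow_add, pow_mul,
    neg_one_sq, one_pow, one_mul]

lemma cons_comp_succ {α : Type*} {n : ℕ} (a : α) (v : Fin n → α) :
    Fin.cons a v ∘ Fin.succ = v := by
  funext j; simp [Function.comp]

lemma cons_comp_succ_comp {α : Type*} {n m : ℕ} (a : α) (v : Fin n → α) (h : Fin m → Fin n) :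
    Fin.cons a v ∘ (Fin.succ ∘ h) = v ∘ h := by
  funext j; simp [Function.comp]

lemma cons_comp_succAbove_succ {α : Type*} {n : ℕ} (a : α) (v : Fin (n+1) → α) (i : Fin (n+1)) :
    Fin.cons a v ∘ (Fin.succ i).succAbove = Fin.cons a (v ∘ i.succAbove) := by
  funext j
  cases j using Fin.cases with
  | zero => simp [Function.comp, Fin.succ_succAbove_zero]
  | succ j => simp [Function.comp, Fin.succ_succAbove_succ]

lemma cons_comp_succAbove_succ2 {α : Type*} {n : ℕ} (a : α) (v : Fin (n+2) → α)
    (i : Fin (n+2)) (j : Fin (n+1)) :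
    Fin.cons a v ∘ ((Fin.succ i).succAbove ∘ (Fin.succ j).succAbove)
      = Fin.cons a (v ∘ (i.succAbove ∘ j.succAbove)) := by
  funext t
  cases t using Fin.cases with
  | zero => simp [Function.comp, Fin.succ_succAbove_zero]
  | succ t => simp [Function.comp, Fin.succ_succAbove_succ]

lemma key_lemma (ρ : R →ₐ[k] S) {m : ℕ} (Q : (Fin (m+1) → R) → R)
    (hQ : IsPolyDeriv (AlgHom.id k R) Q) {r : ℕ} (u c : Fin r → R) (hu : ∀ β, ρ (u β) = 0)
    (z : Fin m → R) :
    ρ (Q (Fin.cons (∑ β, u β * c β) z)) = ∑ β, ρ (c β) * ρ (Q (Fin.cons (u β) z)) := by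
  have hadd : ∀ a b : R, Q (Fin.cons (a+b) z) = Q (Fin.cons a z) + Q (Fin.cons b z) := by
    intro a b
    simpa [Fin.update_cons_zero] using hQ.1 (Fin.cons 0 z) 0 a b
  have hmul : ∀ a b : R, Q (Fin.cons (a*b) z) = a * Q (Fin.cons b z) + b * Q (Fin.cons a z) := by
    intro a b
    simpa [Fin.update_cons_zero] using hQ.2.2.1 (Fin.cons 0 z) 0 a b
  let q : R →+ R := AddMonoidHom.mk' (fun a => Q (Fin.cons a z)) hadd
  have hq : ∀ a, q a = Q (Fin.cons a z) := fun _ => rfl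
  calc ρ (Q (Fin.cons (∑ β, u β * c β) z)) = ρ (∑ β, Q (Fin.cons (u β * c β) z)) := by
        rw [← hq, map_sum]
        simp [hq]
    _ = ∑ β, ρ (Q (Fin.cons (u β * c β) z)) := map_sum ρ _ _
    _ = ∑ β, ρ (c β) * ρ (Q (Fin.cons (u β) z)) := by
        refine Finset.sum_congr rfl fun β _ => ?_
        rw [hmul, map_add, map_mul, map_mul, hu β, zero_mul, zero_add, mul_comm]

lemma swap01 {m : ℕ} (Q : (Fin (m+2) → R) → R) (hQ : IsPolyDeriv (AlgHom.id k R) Q)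
    (a b : R) (z : Fin m → R) :
    Q (Fin.cons a (Fin.cons b z)) = - Q (Fin.cons b (Fin.cons a z)) := by
  have add0 : ∀ (c d : R) (y : Fin (m+1) → R),
      Q (Fin.cons (c+d) y) = Q (Fin.cons c y) + Q (Fin.cons d y) := by
    intro c d y
    simpa [Fin.update_cons_zero] using hQ.1 (Fin.cons 0 y) 0 c d
  have add1 : ∀ (c d e : R),
      Q (Fin.cons c (Fin.cons (d+e) z)) = Q (Fin.cons c (Fin.cons d z)) + Q (Fin.cons c (Fin.cons e z)) := by
    intro c d e
    have e1 : ∀ d : R, Function.update (Fin.cons c (Fin.cons (0:R) z)) 1 d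
        = (Fin.cons c (Fin.cons d z) : Fin (m+2) → R) := by
      intro d
      funext t
      rw [Function.update_apply]
      by_cases ht : t = 1
      · subst ht
        rw [if_pos rfl, ← Fin.succ_zero_eq_one, Fin.cons_succ, Fin.cons_zero]
      · rw [if_neg ht]
        cases t using Fin.cases with
        | zero => rw [Fin.cons_zero, Fin.cons_zero]
        | succ t =>
          rw [Fin.cons_succ, Fin.cons_succ]
          cases t using Fin.cases with
          | zero => exact absurd Fin.succ_zero_eq_one ht
          | succ t => rw [Fin.cons_succ, Fin.cons_succ]
    have h := hQ.1 (Fin.cons c (Fin.cons 0 z)) 1 d e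
    rwa [e1, e1, e1] at h
  have alt : ∀ c : R, Q (Fin.cons c (Fin.cons c z)) = 0 := by
    intro c
    refine hQ.2.2.2 _ 0 1 (by simp [Fin.ext_iff]) ?_
    rw [← Fin.succ_zero_eq_one, Fin.cons_zero, Fin.cons_succ, Fin.cons_zero]
  have h := alt (a + b)
  rw [add0, add1, add1, alt a, alt b] at h
  linear_combination h

/-- The differential `π` of the complex associated with a Poisson map; for `f = id`
this is the Lichnerowicz differential `[Λ₀,−]` (up to the sign conventions used for
`−[−,Λ₀]|_X`). -/
def piDiff (L : PoissonBracket k S) (P : PoissonBracket k R) (f : R →ₐ[k] S)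
    {n : ℕ} (Q : (Fin (n + 1) → R) → S) : (Fin (n + 2) → R) → S := fun x =>
  (∑ i : Fin (n + 2), (-1 : S) ^ (n + 1 - (i : ℕ)) * L.br (Q (x ∘ i.succAbove)) (f (x i)))
    + (-1 : S) ^ (n + 1) *
      ∑ i : Fin (n + 2), ∑ j : Fin (n + 1),
        if (i : ℕ) < ((i.succAbove j : Fin (n + 2)) : ℕ) then
          (-1 : S) ^ ((i : ℕ) + ((i.succAbove j : Fin (n + 2)) : ℕ) + 1) *
            Q (Fin.cons (P.br (x i) (x (i.succAbove j))) (x ∘ i.succAbove ∘ j.succAbove))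
        else 0

/-- Wedge of an `S`-valued `(p+1)`-vector along `X` with an `S`-valued vector field. -/
def wedgeVF {p : ℕ} (s : (Fin (p + 1) → R) → S) (Tf : R → S) : (Fin (p + 2) → R) → S :=
  fun x => ∑ i : Fin (p + 2),
    (-1 : S) ^ (p + 1 - (i : ℕ)) * (s (x ∘ i.succAbove) * Tf (x i))

theorem stmt16
    (ρ : R →ₐ[k] S)
    (L : PoissonBracket k R) (LS : PoissonBracket k S)
    (hρ : ∀ x y : R, ρ (L.br x y) = LS.br (ρ x) (ρ y))
    {r : ℕ} (w : Fin r → R) (hw : ∀ α, ρ (w α) = 0)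
    (T : Fin r → Fin r → R → R)
    (hT : ∀ (α : Fin r) (x : R), L.br (w α) x = ∑ β : Fin r, w β * T α β x) :
    -- (a) compatibility with transition functions `w_i^α = Σ_β w_k^β F_{ikβ}^α`:
    ((∀ {p : ℕ} (ga : (Fin (p + 1) → R) → R), IsPolyDeriv (AlgHom.id k R) ga →
        ∀ (w' : Fin r → R) (Fm : Fin r → Fin r → R),
          (∀ β, ρ (w' β) = 0) →
          (∀ α, w α = ∑ β : Fin r, w' β * Fm α β) →
          ∀ (α : Fin r) (x : Fin p → R),
            ρ (ga (Fin.cons (w α) x))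
              = ∑ β : Fin r, ρ (Fm α β) * ρ (ga (Fin.cons (w' β) x)))
    -- (b) chain-map identity `φ̃(−[g,Λ₀]) = ∇(φ̃ g)` in degrees `p+2 ≥ 2`:
    ∧ (∀ {p : ℕ} (g : (Fin (p + 2) → R) → R), IsPolyDeriv (AlgHom.id k R) g →
        ∀ (α : Fin r) (x : Fin (p + 2) → R),
          - ρ ((piDiff L L (AlgHom.id k R) g) (Fin.cons (w α) x))
            = - (piDiff LS L ρ
                  (fun y : Fin (p + 1) → R => ρ (g (Fin.cons (w α) y)))) x
              + ∑ β : Fin r,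
                  wedgeVF (fun y : Fin (p + 1) → R => ρ (g (Fin.cons (w β) y)))
                    (fun a : R => ρ (T α β a)) x)
    -- (b') chain-map identity in the lowest degree (vector fields):
    ∧ (∀ g1 : (Fin 1 → R) → R, IsPolyDeriv (AlgHom.id k R) g1 →
        ∀ (α : Fin r) (x : Fin 1 → R),
          - ρ ((piDiff L L (AlgHom.id k R) g1) (Fin.cons (w α) x))
            = - LS.br (ρ (g1 ![w α])) (ρ (x 0))
              + ∑ β : Fin r, ρ (g1 ![w β]) * ρ (T α β (x 0)))) := by
  refine ⟨?_, ?_, ?_⟩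
  · intro p ga hga w' Fm hw' htrans α x
    rw [htrans α]
    exact key_lemma ρ ga hga w' (Fm α) hw' x
  · intro p g hg α x
    have key : ∀ (a : R) (z : Fin (p+1) → R),
        ρ (g (Fin.cons (L.br (w α) a) z)) = ∑ β, ρ (T α β a) * ρ (g (Fin.cons (w β) z)) := by
      intro a z; rw [hT α a]; exact key_lemma ρ g hg w (fun β => T α β a) hw z
    have hswap : ∀ (b : R) (z : Fin p → R),
        ρ (g (Fin.cons b (Fin.cons (w α) z))) = - ρ (g (Fin.cons (w α) (Fin.cons b z))) := by
      intro b z; rw [swap01 g hg, map_neg]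
    have hL : ρ ((piDiff L L (AlgHom.id k R) g) (Fin.cons (w α) x)) =
        (∑ i : Fin (p+2), (-1:S)^(p+1-(i:ℕ)) *
            LS.br (ρ (g (Fin.cons (w α) (x ∘ i.succAbove)))) (ρ (x i)))
        + (-1:S)^(p+1+1) *
          ((∑ j : Fin (p+2), (-1:S)^((j:ℕ)+1+1) *
              ∑ β : Fin r, ρ (T α β (x j)) * ρ (g (Fin.cons (w β) (x ∘ j.succAbove))))
           - ∑ i : Fin (p+2), ∑ j : Fin (p+1),
              if (i:ℕ) < ((i.succAbove j : Fin (p+2)) : ℕ) then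
                (-1:S)^((i:ℕ) + ((i.succAbove j : Fin (p+2)) : ℕ) + 1) *
                  ρ (g (Fin.cons (w α) (Fin.cons (L.br (x i) (x (i.succAbove j)))
                    (x ∘ (i.succAbove ∘ j.succAbove)))))
              else 0) := by
      simp only [piDiff, AlgHom.coe_id, id_eq, map_add, map_mul, map_pow, map_neg, map_one,
        map_sum, apply_ite (⇑ρ), map_zero, hρ]
      congr 1
      · rw [Fin.sum_univ_succ]
        have h0 : (-1:S)^(p+1+1-((0:Fin (p+3)):ℕ)) *
            LS.br (ρ (g (Fin.cons (w α) x ∘ (0:Fin (p+3)).succAbove)))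
              (ρ ((Fin.cons (w α) x : Fin (p+3) → R) 0)) = 0 := by
          rw [Fin.cons_zero, hw, br_zero_right, mul_zero]
        rw [h0, zero_add]
        refine Finset.sum_congr rfl fun i _ => ?_
        rw [cons_comp_succAbove_succ, Fin.cons_succ, Fin.val_succ,
          show p+1+1-((i:ℕ)+1) = p+1-(i:ℕ) by omega]
      · congr 1
        rw [Fin.sum_univ_succ, sub_eq_add_neg]
        congr 1
        · refine Finset.sum_congr rfl fun j _ => ?_
          simp only [Fin.succAbove_zero, Fin.zero_succAbove, Fin.val_zero, Fin.val_succ,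
            Fin.cons_zero, Fin.cons_succ, cons_comp_succ_comp]
          rw [if_pos (Nat.succ_pos _), key, zero_add]
        · rw [← Finset.sum_neg_distrib]
          refine Finset.sum_congr rfl fun i' _ => ?_
          rw [Fin.sum_univ_succ]
          have h0 : (if ((Fin.succ i' : Fin (p+3)):ℕ) <
              (((Fin.succ i').succAbove 0 : Fin (p+3)):ℕ) then
                (-1:S)^(((Fin.succ i' : Fin (p+3)):ℕ) +
                  (((Fin.succ i').succAbove 0 : Fin (p+3)):ℕ) + 1) *
                ρ (g (Fin.cons (L.br ((Fin.cons (w α) x : Fin (p+3) → R) (Fin.succ i'))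
                  ((Fin.cons (w α) x : Fin (p+3) → R) ((Fin.succ i').succAbove 0)))
                  (Fin.cons (w α) x ∘ ((Fin.succ i').succAbove ∘ (0:Fin (p+2)).succAbove))))
              else 0) = 0 := by
            rw [if_neg]
            simp only [Fin.succ_succAbove_zero, Fin.val_zero, Fin.val_succ]
            omega
          rw [h0, zero_add, ← Finset.sum_neg_distrib]
          refine Finset.sum_congr rfl fun j' _ => ?_
          simp only [Fin.succ_succAbove_succ, Fin.val_succ, Fin.cons_succ,
            cons_comp_succAbove_succ2, add_lt_add_iff_right]
          split_ifs with h
          · rw [hswap]; ring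
          · rw [neg_zero]
    have hR : (piDiff LS L ρ (fun y : Fin (p+1) → R => ρ (g (Fin.cons (w α) y)))) x
        = (∑ i : Fin (p+2), (-1:S)^(p+1-(i:ℕ)) *
              LS.br (ρ (g (Fin.cons (w α) (x ∘ i.succAbove)))) (ρ (x i)))
          + (-1:S)^(p+1) * ∑ i : Fin (p+2), ∑ j : Fin (p+1),
              if (i:ℕ) < ((i.succAbove j : Fin (p+2)) : ℕ) then
                (-1:S)^((i:ℕ) + ((i.succAbove j : Fin (p+2)) : ℕ) + 1) *
                  ρ (g (Fin.cons (w α) (Fin.cons (L.br (x i) (x (i.succAbove j)))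
                    (x ∘ (i.succAbove ∘ j.succAbove)))))
              else 0 := rfl
    have hW : ∀ β : Fin r,
        wedgeVF (fun y : Fin (p+1) → R => ρ (g (Fin.cons (w β) y))) (fun a => ρ (T α β a)) x
        = ∑ i : Fin (p+2), (-1:S)^(p+1-(i:ℕ)) *
            (ρ (g (Fin.cons (w β) (x ∘ i.succAbove))) * ρ (T α β (x i))) := fun β => rfl
    have hBW : ∑ β : Fin r, ∑ i : Fin (p+2), (-1:S)^(p+1-(i:ℕ)) *
          (ρ (g (Fin.cons (w β) (x ∘ i.succAbove))) * ρ (T α β (x i)))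
        = (-1:S)^(p+1) * ∑ j : Fin (p+2), (-1:S)^((j:ℕ)+1+1) *
            ∑ β : Fin r, ρ (T α β (x j)) * ρ (g (Fin.cons (w β) (x ∘ j.succAbove))) := by
      rw [Finset.sum_comm, Finset.mul_sum]
      refine Finset.sum_congr rfl fun j _ => ?_
      rw [← mul_assoc, Finset.mul_sum]
      refine Finset.sum_congr rfl fun β _ => ?_
      rw [neg_one_pow_sub' (Fin.is_le j)]
      ring
    rw [hL, hR]
    simp only [hW]
    rw [hBW]
    ring
  · intro g1 hg1 α x
    have E0 : (Fin.cons (w α) x ∘ (0:Fin 2).succAbove) = ![x 0] := by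
      funext t
      rw [Fin.fin_one_eq_zero t]
      simp only [Function.comp_apply, Matrix.cons_val_zero]
      rw [show ((0:Fin 2).succAbove 0) = Fin.succ 0 by decide, Fin.cons_succ]
    have E1 : (Fin.cons (w α) x ∘ (1:Fin 2).succAbove) = ![w α] := by
      funext t
      rw [Fin.fin_one_eq_zero t]
      simp only [Function.comp_apply, Matrix.cons_val_zero]
      rw [show ((1:Fin 2).succAbove 0) = 0 by decide, Fin.cons_zero]
    have E4 : (Fin.cons (w α) x : Fin 2 → R) 1 = x 0 := by
      rw [← Fin.succ_zero_eq_one, Fin.cons_succ]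
    have E2 : (Fin.cons (L.br ((Fin.cons (w α) x : Fin 2 → R) 0) ((Fin.cons (w α) x : Fin 2 → R) 1))
        (Fin.cons (w α) x ∘ Fin.succAbove 0 ∘ Fin.succAbove 0) : Fin 1 → R)
        = ![L.br (w α) (x 0)] := by
      funext t
      rw [Fin.fin_one_eq_zero t]
      show Fin.cons _ _ 0 = _
      rw [Fin.cons_zero, Fin.cons_zero, E4, Matrix.cons_val_zero]
    have h1 : ρ (L.br (g1 ![x 0]) (w α)) = 0 := by rw [hρ, hw, br_zero_right]
    have h2 := hρ (g1 ![w α]) (x 0)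
    have e3 : ρ (g1 ![L.br (w α) (x 0)]) = ∑ β, ρ (g1 ![w β]) * ρ (T α β (x 0)) := by
      rw [hT α (x 0)]
      exact (key_lemma ρ g1 hg1 w (fun β => T α β (x 0)) hw ![]).trans
        (Finset.sum_congr rfl fun β _ => mul_comm _ _)
    simp only [piDiff, AlgHom.coe_id, id_eq, Nat.reduceAdd, Fin.sum_univ_two, Fin.sum_univ_one, E0, E1]
    rw [show Fin.succAbove (0:Fin 2) 0 = 1 by decide, show Fin.succAbove (1:Fin 2) 0 = 0 by decide]
    rw [E2, Fin.cons_zero, E4]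
    norm_num [Fin.val_zero, Fin.val_one, map_add, map_mul, map_neg, map_one, h1, h2, e3]
    try ring
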